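/- arXiv:2101.11541 — 3 statements merged into one kernel-verified Lean document; each statement's English description precedes it below -/
import Mathlib

section
/- Let G be a finite group, N a normal subgroup, and suppose that for every g ∈ N the conjugacy class of g in G equals g·[g,G]. Then N is contained in the hypercenter Z_∞(G) of G. In particular, N is nilpotent. -/
open scoped commutatorElement

/-- The subgroup `[g,G]` generated by the commutators `[g,x]`, `x ∈ G`. -/
def commSub {G : Type*} [Group G] (g : G) : Subgroup G :=
  Subgroup.closure {c | ∃ x : G, c = ⁅g, x⁆}

/-- The conjugacy class of `g` in `G`. -/
def conjClass {G : Type*} [Group G] (g : G) : Set G := {h | IsConj g h}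

/-- `g` is flat in `G` if its conjugacy class is the coset `g[g,G]`. -/
def IsFlat {G : Type*} [Group G] (g : G) : Prop :=
  conjClass g = (g * ·) '' (commSub g : Set G)

/-!
If every element of a normal subgroup `N` of a finite group is flat, then `N` meets the centre:
starting from `1 ≠ g ∈ N`, either `g` is central, or some `k = [g,x] ≠ 1` lies in `N` with
`[k,G] < [g,G]`, the inclusion being strict because a nontrivial flat element `k` never lies in
its own `[k,G]` (otherwise `1 = k k⁻¹` would be conjugate to `k`). Since flatness passes to
quotients, induction on `|G|` applied to the image of `N` in `G/Z(G)` puts `N` in `Z_{n+1}(G)`.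
-/

section Flat

open Subgroup

variable {G : Type*} [Group G]

lemma commutatorElement_mem_commSub (g x : G) : ⁅g, x⁆ ∈ commSub g :=
  subset_closure ⟨x, rfl⟩

instance commSub_normal (g : G) : (commSub g).Normal where
  conj_mem k hk y := by
    have hconj : (commSub g).map (MulAut.conj y).toMonoidHom ≤ commSub g := by
      rw [commSub, MonoidHom.map_closure, closure_le]
      rintro _ ⟨_, ⟨x, rfl⟩, rfl⟩
      have hcomm : y * ⁅g, x⁆ * y⁻¹ = ⁅g, y⁆⁻¹ * ⁅g, y * x⁆ := by
        simp only [commutatorElement_def]; group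
      change y * ⁅g, x⁆ * y⁻¹ ∈ commSub g
      rw [hcomm]
      exact mul_mem (inv_mem (commutatorElement_mem_commSub g y))
        (commutatorElement_mem_commSub g (y * x))
    exact hconj ⟨k, hk, rfl⟩

lemma commSub_le_of_mem {H : Subgroup G} [H.Normal] {g : G} (hg : g ∈ H) : commSub g ≤ H :=
  (closure_le _).2 fun _ ⟨x, hx⟩ =>
    hx ▸ commutator_le_left H ⊤ (commutator_mem_commutator hg (mem_top x))

lemma IsFlat.eq_one_of_mem_commSub {g : G} (hg : IsFlat g) (hmem : g ∈ commSub g) : g = 1 := by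
  have h1 : (1 : G) ∈ conjClass g := by
    rw [hg]
    exact ⟨g⁻¹, inv_mem hmem, mul_inv_cancel g⟩
  exact isConj_one_left.mp h1

lemma exists_mem_center_ne_one_of_forall_isFlat [Finite G] {N : Subgroup G} [N.Normal]
    (hN : ∀ g ∈ N, IsFlat g) {g : G} (hgN : g ∈ N) (hg : g ≠ 1) :
    ∃ z ∈ N, z ∈ center G ∧ z ≠ 1 := by
  induction g using
    WellFounded.induction (InvImage.wf commSub (wellFounded_lt (α := Subgroup G))) with
  | h g ih =>
  by_cases hcentral : g ∈ center G
  · exact ⟨g, hgN, hcentral, hg⟩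
  obtain ⟨x, hx⟩ : ∃ x : G, ⁅g, x⁆ ≠ 1 := by
    contrapose! hcentral
    exact mem_center_iff.mpr fun x => (commutatorElement_eq_one_iff_mul_comm.mp (hcentral x)).symm
  have hkg : ⁅g, x⁆ ∈ commSub g := commutatorElement_mem_commSub g x
  have hkN : ⁅g, x⁆ ∈ N := commSub_le_of_mem hgN hkg
  have hlt : commSub ⁅g, x⁆ < commSub g :=
    (commSub_le_of_mem hkg).lt_of_not_ge fun hge =>
      hx ((hN _ hkN).eq_one_of_mem_commSub (hge hkg))
  exact ih _ hlt hkN hx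

lemma image_conjClass {H : Type*} [Group H] {f : G →* H} (hf : Function.Surjective f) (g : G) :
    f '' conjClass g = conjClass (f g) := by
  ext h
  simp only [conjClass, Set.mem_image, Set.mem_ofPred_eq, isConj_iff]
  constructor
  · rintro ⟨_, ⟨c, rfl⟩, rfl⟩
    exact ⟨f c, by simp⟩
  · rintro ⟨c, rfl⟩
    obtain ⟨c, rfl⟩ := hf c
    exact ⟨c * g * c⁻¹, ⟨c, rfl⟩, by simp⟩

lemma map_commSub {H : Type*} [Group H] {f : G →* H} (hf : Function.Surjective f) (g : G) :
    (commSub g).map f = commSub (f g) := by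
  rw [commSub, commSub, MonoidHom.map_closure]
  congr 1
  ext c
  constructor
  · rintro ⟨_, ⟨x, rfl⟩, rfl⟩
    exact ⟨f x, map_commutatorElement f g x⟩
  · rintro ⟨x, rfl⟩
    obtain ⟨x, rfl⟩ := hf x
    exact ⟨⁅g, x⁆, ⟨x, rfl⟩, map_commutatorElement f g x⟩

lemma IsFlat.map {H : Type*} [Group H] {f : G →* H} (hf : Function.Surjective f) {g : G}
    (hg : IsFlat g) : IsFlat (f g) := by
  rw [IsFlat, ← image_conjClass hf, hg, ← map_commSub hf, coe_map, Set.image_image,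
    Set.image_image]
  simp

end Flat

lemma exists_le_upperCentralSeries_of_forall_isFlat {G : Type*} [Group G] [Finite G]
    (N : Subgroup G) [N.Normal] (hN : ∀ g ∈ N, IsFlat g) :
    ∃ n, N ≤ Subgroup.upperCentralSeries G n := by
  induction hcard : Nat.card G using Nat.strong_induction_on generalizing G with
  | _ m ih =>
  obtain rfl | ⟨g, hgN, hg⟩ := N.bot_or_exists_ne_one
  · exact ⟨0, bot_le⟩
  obtain ⟨z, -, hz, hz1⟩ := exists_mem_center_ne_one_of_forall_isFlat hN hgN hg
  have hcenter : Subgroup.center G ≠ ⊥ := fun hbot => hz1 (Subgroup.mem_bot.mp (hbot ▸ hz))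
  have hlt : Nat.card (G ⧸ Subgroup.center G) < m := by
    rw [← hcard, Subgroup.card_eq_card_quotient_mul_card_subgroup (Subgroup.center G)]
    exact lt_mul_of_one_lt_right Nat.card_pos ((Subgroup.one_lt_card_iff_ne_bot _).mpr hcenter)
  have hsurj := QuotientGroup.mk'_surjective (Subgroup.center G)
  have : (N.map (QuotientGroup.mk' (Subgroup.center G))).Normal := ‹N.Normal›.map _ hsurj
  obtain ⟨n, hn⟩ := ih _ hlt (N.map (QuotientGroup.mk' (Subgroup.center G)))
    (by rintro _ ⟨g, hg, rfl⟩; exact (hN g hg).map hsurj) rfl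
  refine ⟨n + 1, ?_⟩
  rw [← Subgroup.comap_upperCentralSeries_quotient_center]
  exact Subgroup.map_le_iff_le_comap.mp hn

lemma isNilpotent_of_le_upperCentralSeries {G : Type*} [Group G] {N : Subgroup G} {n : ℕ}
    (hN : N ≤ Subgroup.upperCentralSeries G n) : Group.IsNilpotent N := by
  refine (Subgroup.nilpotent_iff_finite_ascending_central_series N).mpr
    ⟨n, fun k => (Subgroup.upperCentralSeries G k).comap N.subtype, ⟨?_, ?_⟩, ?_⟩
  · exact (MonoidHom.comap_bot _).trans N.ker_subtype
  · exact fun x k hx y => Subgroup.mem_upperCentralSeries_succ_iff.mp hx y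
  · exact eq_top_iff.mpr fun x _ => hN x.2

theorem flat_subgroup_le_hypercenter {G : Type*} [Group G] [Fintype G]
    (N : Subgroup G) [N.Normal] (h : ∀ g ∈ N, IsFlat g) :
    (N ≤ ⨆ n, upperCentralSeries G n) ∧ Group.IsNilpotent N := by
  obtain ⟨n, hn⟩ := exists_le_upperCentralSeries_of_forall_isFlat N h
  exact ⟨hn.trans (le_iSup _ n), isNilpotent_of_le_upperCentralSeries hn⟩
end

section
/- Let G be a finite group and define R(G) as the largest normal subgroup R such that every character in Irr(G | R) has central type. Let V = {χ ∈ Irr(G) : V(χ) > Z(χ)} be the set of irreducible characters whose vanishing-off subgroup strictly contains their center. Then R(G) = ∩_{χ ∈ V} ker(χ). -/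
open FDRep CategoryTheory

def charKer {G : Type} [Group G] [Fintype G] (V : FDRep ℂ G) : Set G :=
  {g | V.character g = V.character 1}

def charCenter {G : Type} [Group G] [Fintype G] (V : FDRep ℂ G) : Set G :=
  {g | ‖V.character g‖ = ‖V.character 1‖}

def IsCentralType {G : Type} [Group G] [Fintype G] (V : FDRep ℂ G) : Prop :=
  ∀ g, g ∉ charCenter V → V.character g = 0

def voff {G : Type} [Group G] [Fintype G] (V : FDRep ℂ G) : Subgroup G :=
  Subgroup.closure {g | V.character g ≠ 0}

/-!
Since `ρ(g)` has finite order, it is diagonalisable with eigenvalues on the unit circle, and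
`|χ(g)| = χ(1)` is the equality case of the triangle inequality for their sum: all eigenvalues
coincide and `ρ(g)` is a scalar. Hence `Z(χ)` and `ker χ` are subgroups, so `χ` has central type
iff `V(χ) ⊆ Z(χ)`. A normal subgroup `N` then has all of `Irr(G | N)` of central type iff
`N ⊆ ker χ` for every `χ` with `V(χ) > Z(χ)`, and the intersection of these kernels is the
largest such `N`.
-/

open ComplexConjugate

theorem Complex.eq_one_of_re_eq_one_of_norm_le_one {w : ℂ} (hre : w.re = 1) (hw : ‖w‖ ≤ 1) :
    w = 1 := by
  have hsq : w.re * w.re + w.im * w.im ≤ 1 := by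
    rw [← Complex.normSq_apply, Complex.normSq_eq_norm_sq]
    nlinarith [norm_nonneg w]
  apply Complex.ext <;> simp only [Complex.one_re, Complex.one_im, hre]
  nlinarith

theorem Complex.eq_of_norm_le_one_of_sum_eq_card_mul {s : Multiset ℂ} {ω : ℂ} (hω : ‖ω‖ = 1)
    (hs : ∀ z ∈ s, ‖z‖ ≤ 1) (hsum : s.sum = s.card * ω) : ∀ z ∈ s, z = ω := by
  have hωω : conj ω * ω = 1 := by
    rw [Complex.conj_mul', hω]
    simp
  have hnorm_le : ∀ z ∈ s, ‖z * conj ω‖ ≤ 1 := fun z hz => by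
    rw [norm_mul, Complex.norm_conj, hω, mul_one]
    exact hs z hz
  have hre_sum : (s.map fun z => (z * conj ω).re).sum = s.card := by
    have h := map_multiset_sum Complex.reAddGroupHom (s.map fun z => z * conj ω)
    rw [Multiset.map_map, Multiset.sum_map_mul_right, Multiset.map_id', hsum, mul_assoc,
      mul_comm ω, hωω] at h
    simpa using h.symm
  have hdefect : (s.map fun z => 1 - (z * conj ω).re).sum = 0 := by
    rw [Multiset.sum_map_sub, hre_sum]
    simp
  intro z hz
  have hre : (z * conj ω).re = 1 := by
    have := Multiset.all_zero_of_le_zero_le_of_sum_eq_zero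
      (by simpa using fun z hz => (Complex.re_le_norm _).trans (hnorm_le z hz)) hdefect _
      (Multiset.mem_map_of_mem _ hz)
    linarith
  calc z = z * conj ω * ω := by rw [mul_assoc, hωω, mul_one]
    _ = ω := by rw [Complex.eq_one_of_re_eq_one_of_norm_le_one hre (hnorm_le z hz), one_mul]

namespace Module.End

section Field

variable {K V : Type*} [Field K] [AddCommGroup V] [Module K V] {f : End K V}

theorem HasEigenvalue.isOfFinOrder (hf : IsOfFinOrder f) {μ : K} (hμ : f.HasEigenvalue μ) :
    IsOfFinOrder μ := by
  obtain ⟨n, hn, hfn⟩ := hf.exists_pow_eq_one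
  obtain ⟨v, hv⟩ := hμ.exists_hasEigenvector
  refine isOfFinOrder_iff_pow_eq_one.mpr ⟨n, hn, ?_⟩
  have hv_pow := hv.pow_apply n
  rw [hfn, one_apply] at hv_pow
  exact (smul_left_injective K hv.2).eq_iff.mp (by rw [one_smul]; exact hv_pow.symm)

theorem isSemisimple_of_isOfFinOrder [CharZero K] (hf : IsOfFinOrder f) : f.IsSemisimple := by
  obtain ⟨n, hn, hfn⟩ := hf.exists_pow_eq_one
  refine isSemisimple_of_squarefree_aeval_eq_zero (p := Polynomial.X ^ n - 1) ?_ (by simp [hfn])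
  simpa using
    (Polynomial.separable_X_pow_sub_C (1 : K) (by exact_mod_cast hn.ne') one_ne_zero).squarefree

theorem IsSemisimple.eq_smul_one_of_forall_hasEigenvalue [IsAlgClosed K] [FiniteDimensional K V]
    (hf : f.IsSemisimple) {ω : K} (h : ∀ μ, f.HasEigenvalue μ → μ = ω) : f = ω • 1 := by
  have htop : f.eigenspace ω = ⊤ := by
    rw [eq_top_iff, ← hf.iSup_eigenspace_eq_top, iSup_le_iff]
    intro μ
    by_cases hμ : f.HasEigenvalue μ
    · rw [h μ hμ]
    · rw [hasEigenvalue_iff, not_not] at hμ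
      simp [hμ]
  ext v
  simpa using mem_eigenspace_iff.mp (htop ▸ Submodule.mem_top : v ∈ f.eigenspace ω)

end Field

variable {V : Type*} [AddCommGroup V] [Module ℂ V] [FiniteDimensional ℂ V] {f : End ℂ V}

theorem exists_eq_smul_one_of_norm_trace_eq_finrank (hf : IsOfFinOrder f)
    (htr : ‖LinearMap.trace ℂ V f‖ = Module.finrank ℂ V) : ∃ ω : ℂ, ‖ω‖ = 1 ∧ f = ω • 1 := by
  set n := Module.finrank ℂ V
  rcases eq_or_ne n 0 with hn | hn
  · have : Subsingleton V := Module.finrank_zero_iff.mp hn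
    exact ⟨1, norm_one, Subsingleton.elim _ _⟩
  set ω := LinearMap.trace ℂ V f / n
  have hω : ‖ω‖ = 1 := by
    rw [norm_div, htr, Complex.norm_natCast, div_self (by exact_mod_cast hn)]
  have hmem_roots : ∀ μ, μ ∈ f.charpoly.roots ↔ f.HasEigenvalue μ := fun μ => by
    rw [Polynomial.mem_roots f.charpoly_monic.ne_zero, hasEigenvalue_iff_isRoot_charpoly]
  have hcard : f.charpoly.roots.card = n := by
    rw [(Polynomial.splits_iff_card_roots).mp (IsAlgClosed.splits _), LinearMap.charpoly_natDegree]
  have hsum : f.charpoly.roots.sum = f.charpoly.roots.card * ω := by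
    rw [← trace_eq_sum_roots_charpoly_of_splits (IsAlgClosed.splits _), hcard,
      mul_div_cancel₀ _ (by exact_mod_cast hn)]
  have hroots := Complex.eq_of_norm_le_one_of_sum_eq_card_mul hω
    (fun μ hμ => (((hmem_roots μ).mp hμ).isOfFinOrder hf).norm_eq_one.le) hsum
  exact ⟨ω, hω, (isSemisimple_of_isOfFinOrder hf).eq_smul_one_of_forall_hasEigenvalue
    fun μ hμ => hroots μ ((hmem_roots μ).mpr hμ)⟩

end Module.End

namespace FDRep

theorem character_eq_of_ρ_eq_smul_one {k G : Type*} [Field k] [Monoid G] (V : FDRep k G)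
    {g : G} {ω : k} (h : V.ρ g = ω • 1) : V.character g = ω * Module.finrank k V := by
  simp [character, h]

variable {G : Type} [Group G] [Fintype G] (V : FDRep ℂ G)

theorem mem_charCenter_iff {g : G} :
    g ∈ charCenter V ↔ ∃ ω : ℂ, ‖ω‖ = 1 ∧ V.ρ g = ω • 1 := by
  refine ⟨fun hg => ?_, fun ⟨ω, hω, hg⟩ => ?_⟩
  · have htr : ‖V.character g‖ = Module.finrank ℂ V := by
      simpa [charCenter, char_one] using hg
    exact Module.End.exists_eq_smul_one_of_norm_trace_eq_finrank
      (V.ρ.isOfFinOrder (isOfFinOrder_of_finite g)) htr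
  · simp [charCenter, character_eq_of_ρ_eq_smul_one V hg, char_one, hω]

theorem coe_ker_ρ : (V.ρ.ker : Set G) = charKer V := by
  ext g
  refine ⟨fun hg => ?_, fun hg => ?_⟩
  · simp [charKer, character, (MonoidHom.mem_ker).mp hg]
  have hg' : V.character g = Module.finrank ℂ V := by rwa [← char_one]
  obtain ⟨ω, -, hω⟩ := (mem_charCenter_iff V (g := g)).mp (by simp [charCenter, hg', char_one])
  rcases eq_or_ne (Module.finrank ℂ V) 0 with hn | hn
  · have : Subsingleton V := Module.finrank_zero_iff.mp hn
    exact Subsingleton.elim _ _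
  have hω_one : ω = 1 := by
    have h := character_eq_of_ρ_eq_smul_one V hω
    rw [hg'] at h
    exact (mul_eq_right₀ (by exact_mod_cast hn)).mp h.symm
  simp [MonoidHom.mem_ker, hω, hω_one]

def charCenterSubgroup : Subgroup G where
  carrier := charCenter V
  one_mem' := (mem_charCenter_iff V).mpr ⟨1, norm_one, by simp⟩
  mul_mem' := by
    rintro a b ha hb
    obtain ⟨ω₁, hω₁, ha⟩ := (mem_charCenter_iff V).mp ha
    obtain ⟨ω₂, hω₂, hb⟩ := (mem_charCenter_iff V).mp hb
    refine (mem_charCenter_iff V).mpr ⟨ω₁ * ω₂, by simp [hω₁, hω₂], ?_⟩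
    rw [map_mul, ha, hb, smul_mul_smul_comm, one_mul]
  inv_mem' := by
    rintro a ha
    obtain ⟨ω, hω, ha⟩ := (mem_charCenter_iff V).mp ha
    have hω0 : ω ≠ 0 := by rintro rfl; simp at hω
    refine (mem_charCenter_iff V).mpr ⟨ω⁻¹, by simp [hω], ?_⟩
    exact left_inv_eq_right_inv (by rw [← map_mul, inv_mul_cancel, map_one])
      (by simp [ha, smul_smul, hω0])

theorem isCentralType_iff : IsCentralType V ↔ (voff V : Set G) ⊆ charCenter V := by
  refine ⟨fun h => ?_, fun h g hg => ?_⟩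
  · refine (Subgroup.closure_le (charCenterSubgroup V)).mpr fun g hg => ?_
    by_contra hc
    exact hg (h g hc)
  · by_contra h0
    exact hg (h (Subgroup.subset_closure h0))

end FDRep

theorem R_eq_inter_kernels_general {G : Type} [Group G] [Fintype G]
    (R : Subgroup G)
    (hRct : ∀ V : FDRep ℂ G, Simple V → ¬((R : Set G) ⊆ charKer V) → IsCentralType V)
    (hmax : ∀ R' : Subgroup G, R'.Normal →
      (∀ V : FDRep ℂ G, Simple V → ¬((R' : Set G) ⊆ charKer V) → IsCentralType V) → R' ≤ R) :
    (R : Set G) =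
      ⋂ V ∈ {V : FDRep ℂ G | Simple V ∧ ¬((voff V : Set G) ⊆ charCenter V)}, charKer V := by
  set 𝒱 := {V : FDRep ℂ G | Simple V ∧ ¬((voff V : Set G) ⊆ charCenter V)}
  let K : Subgroup G := ⨅ V ∈ 𝒱, V.ρ.ker
  have hK : (K : Set G) = ⋂ V ∈ 𝒱, charKer V := by
    simp only [K, Subgroup.coe_iInf, coe_ker_ρ]
  have hK_normal : K.Normal :=
    Subgroup.normal_iInf_normal fun V => Subgroup.normal_iInf_normal fun _ => V.ρ.normal_ker
  refine subset_antisymm (Set.subset_iInter₂ fun V ⟨hV, hvoff⟩ => ?_) (hK ▸ hmax K hK_normal ?_)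
  · by_contra hR
    exact hvoff ((isCentralType_iff V).mp (hRct V hV hR))
  · intro V hV hKV
    rw [isCentralType_iff]
    by_contra hvoff
    exact hKV (hK ▸ Set.biInter_subset_of_mem (show V ∈ 𝒱 from ⟨hV, hvoff⟩))

theorem R_eq_inter_kernels {G : Type} [Group G] [Fintype G]
    (R : Subgroup G) [R.Normal]
    (hRct : ∀ V : FDRep ℂ G, Simple V → ¬((R : Set G) ⊆ charKer V) → IsCentralType V)
    (hmax : ∀ R' : Subgroup G, R'.Normal →
      (∀ V : FDRep ℂ G, Simple V → ¬((R' : Set G) ⊆ charKer V) → IsCentralType V) → R' ≤ R) :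
    (R : Set G) =
      ⋂ V ∈ {V : FDRep ℂ G | Simple V ∧ ¬((voff V : Set G) ⊆ charCenter V)}, charKer V :=
  R_eq_inter_kernels_general R hRct hmax
end

section
/- Let G be a finite group, N a normal subgroup, and suppose every irreducible character of G whose kernel does not contain N vanishes on G \ N. Then (G,N) is a Camina pair: for every g ∈ G \ N, the conjugacy class of g contains the coset gN. -/
open FDRep CategoryTheory

/-!
Characters of simple representations separate conjugacy classes. If all of them agree at `g` and
`g'`, then `∑ₓ x g x⁻¹ - ∑ₓ x g' x⁻¹` is a central element of `ℂ[G]` whose trace vanishes on every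
simple representation; by Schur's lemma it acts there by zero, so it is zero since `ℂ[G]` is
semisimple, and comparing coefficients at `g` shows that `g` and `g'` are conjugate.

Under the vanishing hypothesis every simple character `χ` agrees at `g` and `gn`: either `χ`
vanishes at both, or `N ≤ ker χ`, and then `ρ n = 1` because a character that is constantly `χ(1)`
on the finite group `N` has all of `V` as `N`-invariants.
-/

open MonoidAlgebra Representation Finset

universe u

theorem IsSemisimpleRing.eq_zero_of_forall_mem_annihilator {A : Type*} [Ring A]
    [IsSemisimpleRing A] {z : A}
    (hz : ∀ S : Submodule A A, IsSimpleModule A S → z ∈ Module.annihilator A S) : z = 0 := by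
  have hz' : z ∈ (⊤ : Submodule A A).annihilator := by
    rw [← IsSemisimpleModule.sSup_simples_eq_top, sSup_eq_iSup', Submodule.annihilator_iSup]
    exact Submodule.mem_iInf _ |>.mpr fun S => hz S S.2
  simpa using Submodule.mem_annihilator.mp hz' 1 trivial

namespace MonoidAlgebra

variable (k : Type*) {G : Type*} [CommSemiring k] [Group G] [Fintype G]

noncomputable def conjSum (g : G) : k[G] := ∑ x : G, single (x * g * x⁻¹) 1

variable {k}

theorem commute_single_one_conjSum (y g : G) : Commute (single y 1) (conjSum k g) := by
  simp only [Commute, SemiconjBy, conjSum, mul_sum, sum_mul, single_mul_single, mul_one]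
  exact Fintype.sum_equiv (Equiv.mulLeft y) _ _ fun x => by simp [mul_assoc]

theorem commute_conjSum (a : k[G]) (g : G) : Commute a (conjSum k g) := by
  induction a using MonoidAlgebra.induction_linear with
  | zero => exact Commute.zero_left _
  | add a b ha hb => exact ha.add_left hb
  | single y c =>
    rw [← mul_one c, ← smul_eq_mul, ← smul_single]
    exact (commute_single_one_conjSum y g).smul_left c

theorem coeff_conjSum [DecidableEq G] (g x : G) :
    (conjSum k g).coeff x = #{y | y * g * y⁻¹ = x} := by
  simp [conjSum, coeff_sum, coeff_single, Finsupp.single_apply, sum_boole]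

end MonoidAlgebra

namespace Representation

variable {k G V : Type*} [Field k] [Group G] [AddCommGroup V] [Module k V]
  (ρ : Representation k G V)

theorem eq_one_of_forall_character_eq_character_one [Finite G] [CharZero k] [FiniteDimensional k V]
    (hρ : ∀ g, ρ.character g = ρ.character 1) (g : G) : ρ g = 1 := by
  have := Fintype.ofFinite G
  have : Invertible (Nat.card G : k) := invertibleOfNonzero (NeZero.ne _)
  have hfin := ρ.card_inv_mul_sum_char_eq_finrank
  simp only [hρ, sum_const, card_univ, nsmul_eq_mul, char_one, Nat.card_eq_fintype_card] at hfin
  rw [inv_mul_cancel_left₀ (by exact_mod_cast Fintype.card_ne_zero)] at hfin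
  have htop : ρ.invariants = ⊤ := Submodule.eq_top_of_finrank_eq (by exact_mod_cast hfin.symm)
  ext v
  exact (ρ.mem_invariants v).mp (htop ▸ Submodule.mem_top) g

theorem trace_asAlgebraHom_conjSum [Fintype G] (g : G) :
    LinearMap.trace k V (ρ.asAlgebraHom (conjSum k g)) = Fintype.card G • ρ.character g := by
  have hconj (x : G) : LinearMap.trace k V (ρ (x * g * x⁻¹)) = ρ.character g := ρ.char_conj g x
  simp only [conjSum, map_sum, asAlgebraHom_single, one_smul, hconj, sum_const, card_univ]

end Representation

namespace FDRep

variable {k G : Type u} [Field k] [Group G]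

theorem simple_of_isIrreducible [Finite G] [IsAlgClosed k] [NeZero (Nat.card G : k)]
    (V : FDRep k G) [hρ : Representation.IsIrreducible V.ρ] : Simple V := by
  rw [simple_iff_end_is_rank_one, ← (forget₂HomLinearEquiv V V).finrank_eq,
    (Rep.homLinearEquiv _ _).finrank_eq]
  exact IsIrreducible.finrank_intertwiningMap_self V.ρ

theorem asAlgebraHom_eq_zero_of_trace_eq_zero [IsAlgClosed k] [CharZero k] (V : FDRep k G)
    [Simple V] {z : k[G]} (hz : ∀ a, Commute a z)
    (htr : LinearMap.trace k V (asAlgebraHom V.ρ z) = 0) : asAlgebraHom V.ρ z = 0 := by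
  let φ : V ⟶ V := ⟨FGModuleCat.ofHom (asAlgebraHom V.ρ z), fun g => by
    ext v
    have hcomm := LinearMap.congr_fun ((hz (single g 1)).map (asAlgebraHom V.ρ)).symm v
    rw [asAlgebraHom_single_one] at hcomm
    exact hcomm⟩
  obtain ⟨c, hc⟩ := endomorphism_simple_eq_smul_id k φ
  have hφ : asAlgebraHom V.ρ z = c • 1 := congrArg (fun ψ : V ⟶ V => ψ.hom.hom.hom) hc.symm
  have : Nontrivial V := by
    by_contra hV
    rw [not_nontrivial_iff_subsingleton] at hV
    exact id_nonzero V (by ext v; exact Subsingleton.elim _ _)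
  rw [hφ, map_smul, LinearMap.trace_one, smul_eq_mul, mul_eq_zero, Nat.cast_eq_zero] at htr
  rw [hφ, htr.resolve_right Module.finrank_pos.ne', zero_smul]

end FDRep

section

variable {k G : Type u} [Field k] [Group G] [Fintype G]

theorem MonoidAlgebra.eq_zero_of_forall_simple_asAlgebraHom_eq_zero [IsAlgClosed k]
    [NeZero (Nat.card G : k)] {z : k[G]}
    (hz : ∀ V : FDRep k G, Simple V → asAlgebraHom V.ρ z = 0) : z = 0 := by
  refine IsSemisimpleRing.eq_zero_of_forall_mem_annihilator fun S hS => ?_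
  have hfin : Module.Finite k (RestrictScalars k k[G] S) := by
    let := RestrictScalars.moduleOrig k k[G] S
    have : Module.Finite k[G] (RestrictScalars k k[G] S) := inferInstanceAs (Module.Finite k[G] S)
    exact Module.Finite.trans k[G] _
  -- The `k`-module structure is passed explicitly: instance search fails to unify the `Semiring k`
  -- coming from `Field k` with the one `RestrictScalars.module` is built on.
  have hS0 : asAlgebraHom (ofModule (k := k) (G := G) S) z = 0 :=
    hz (@FDRep.of k G _ _ _ _ (RestrictScalars.module k k[G] S) hfin (ofModule S))
      (FDRep.simple_of_isIrreducible _ (hρ := (isSimpleModule_iff_irreducible_ofModule S).mp hS))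
  refine Module.mem_annihilator.mpr fun s => ?_
  simpa using LinearMap.congr_fun hS0 ((RestrictScalars.addEquiv k k[G] S).symm s)

theorem isConj_of_forall_simple_character_eq [IsAlgClosed k] [CharZero k] {g g' : G}
    (h : ∀ V : FDRep k G, Simple V → V.character g = V.character g') : IsConj g g' := by
  classical
  have hsum : conjSum k g = conjSum k g' := by
    rw [← sub_eq_zero]
    refine eq_zero_of_forall_simple_asAlgebraHom_eq_zero fun V hV => ?_
    refine V.asAlgebraHom_eq_zero_of_trace_eq_zero
      (fun a => (commute_conjSum a g).sub_right (commute_conjSum a g')) ?_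
    rw [map_sub, map_sub, trace_asAlgebraHom_conjSum, trace_asAlgebraHom_conjSum]
    exact sub_eq_zero.mpr (congrArg _ (h V hV))
  have hcoeff : (conjSum k g').coeff g ≠ 0 := by
    rw [← hsum, coeff_conjSum, Nat.cast_ne_zero, ← pos_iff_ne_zero, card_pos]
    exact ⟨1, by simp⟩
  rw [coeff_conjSum, Nat.cast_ne_zero, ← pos_iff_ne_zero, card_pos] at hcoeff
  obtain ⟨y, hy⟩ := hcoeff
  exact (isConj_iff.mpr ⟨y, (mem_filter.mp hy).2⟩).symm

end

namespace FDRep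

theorem ρ_eq_one_of_subset_charKer {G : Type} [Group G] [Fintype G] (V : FDRep ℂ G)
    {N : Subgroup G} (hN : (N : Set G) ⊆ charKer V) {n : G} (hn : n ∈ N) : V.ρ n = 1 :=
  eq_one_of_forall_character_eq_character_one (V.ρ.comp N.subtype) (fun m => hN m.2) ⟨n, hn⟩

theorem character_mul_of_subset_charKer {G : Type} [Group G] [Fintype G] (V : FDRep ℂ G)
    {N : Subgroup G} (hN : (N : Set G) ⊆ charKer V) {n : G} (hn : n ∈ N) (g : G) :
    V.character (g * n) = V.character g := by
  simp [FDRep.character, V.ρ_eq_one_of_subset_charKer hN hn]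

end FDRep

theorem camina_pair_of_vanishing_general {G : Type} [Group G] [Fintype G]
    (N : Subgroup G)
    (h : ∀ V : FDRep ℂ G, Simple V → ¬((N : Set G) ⊆ charKer V) →
      ∀ g : G, g ∉ N → V.character g = 0) :
    ∀ g : G, g ∉ N → ∀ n ∈ N, IsConj g (g * n) := by
  intro g hg n hn
  refine isConj_of_forall_simple_character_eq (k := ℂ) fun V hV => ?_
  by_cases hN : (N : Set G) ⊆ charKer V
  · exact (V.character_mul_of_subset_charKer hN hn g).symm
  · have hgn : g * n ∉ N := fun hgn => hg (by simpa using N.mul_mem hgn (N.inv_mem hn))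
    rw [h V hV hN g hg, h V hV hN _ hgn]

theorem camina_pair_of_vanishing {G : Type} [Group G] [Fintype G]
    (N : Subgroup G) [N.Normal] (hbot : N ≠ ⊥) (htop : N ≠ ⊤)
    (h : ∀ V : FDRep ℂ G, Simple V → ¬((N : Set G) ⊆ charKer V) →
      ∀ g : G, g ∉ N → V.character g = 0) :
    ∀ g : G, g ∉ N → ∀ n ∈ N, IsConj g (g * n) :=
  camina_pair_of_vanishing_general N h
end
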